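/- Let d≥1, a>b>0, φ(t) = a e^{−bt}, and for i∈ℤ^d and t≥0 set Γ(i,t) = ∑_{n≥1} Aⁿ(0,i) φ^{⋆n}(t). Then there is a constant C such that for all t≥0, ∑_{i∈ℤ^d} |i|² Γ(i,t) ≤ C (1+t) e^{(a−b)t}, where |i| is the Euclidean norm of i. -/

import Mathlib

open MeasureTheory Set Filter Topology intervalIntegral

/-- Lattice points of `ℤ^d`. -/
abbrev Zd (d : ℕ) := Fin d → ℤ

/-- The stochastic matrix `A` on `ℤ^d`: `A i j = (2d+1)⁻¹` if the Euclidean distance between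
`i` and `j` is `0` or `1`, and `A i j = 0` otherwise. -/
noncomputable def Amat (d : ℕ) (i j : Zd d) : ℝ :=
  if (∑ k, (i k - j k) ^ 2 : ℤ) ≤ 1 then ((2 * (d : ℝ) + 1))⁻¹ else 0

/-- Matrix powers of `A`. -/
noncomputable def Apow (d : ℕ) : ℕ → Zd d → Zd d → ℝ
  | 0 => fun i j => if i = j then 1 else 0
  | n + 1 => fun i j => ∑' k : Zd d, Amat d i k * Apow d n k j

/-- Convolution powers: `convPow φ n = φ^{⋆(n+1)}`, where `φ^{⋆1} = φ` and
`φ^{⋆(n+1)} = φ^{⋆n} ⋆ φ` with `(f ⋆ g) t = ∫₀ᵗ f s * g (t - s) ds`. -/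
noncomputable def convPow (φ : ℝ → ℝ) : ℕ → ℝ → ℝ
  | 0 => φ
  | n + 1 => fun t => ∫ s in (0:ℝ)..t, convPow φ n s * φ (t - s)

/-- `Γ(i,t) = ∑_{n≥1} Aⁿ(0,i) φ^{⋆n}(t)` for `φ t = a e^{-bt}`. -/
noncomputable def GammaImp (d : ℕ) (a b : ℝ) (i : Zd d) (t : ℝ) : ℝ :=
  ∑' n : ℕ, Apow d (n + 1) (fun _ => 0) i * convPow (fun s => a * Real.exp (-(b * s))) n t

/-- Euclidean norm on `ℤ^d`. -/
noncomputable def zNorm (d : ℕ) (i : Zd d) : ℝ := Real.sqrt (∑ k, ((i k : ℝ)) ^ 2)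


/-!
Since `φ^{⋆(n+1)}(t) = a^{n+1} tⁿ e^{-bt} / n!`, the estimate reduces to the second moment of
the lazy walk: `∑ⱼ Aⁿ(0,j) |j|² ≤ n`. Reflecting one coordinate about `i` preserves `A`,
so `Aⁿ(i,·)` is centred at `i`; hence each step adds to the second moment only the one-step
term `∑ₖ A(i,k) |k - i|² ≤ 1`, the cross term vanishing. Summing against the weights gives
`∑ᵢ |i|² Γ(i,t) ≤ ∑ₙ (n+1) a^{n+1} tⁿ e^{-bt} / n! = a (1 + a t) e^{(a-b)t}`,
the exchange of the two sums being justified by nonnegativity.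
-/

lemma summable_tsum_comm_of_nonneg {β γ : Type*} {f : β → γ → ℝ}
    (hf : ∀ b c, 0 ≤ f b c) (hrow : ∀ b, Summable (f b))
    (hcol : Summable fun b => ∑' c, f b c) :
    (Summable fun c => ∑' b, f b c) ∧ ∑' c, ∑' b, f b c = ∑' b, ∑' c, f b c := by
  have H : Summable (Function.uncurry f) :=
    (summable_prod_of_nonneg fun p => hf p.1 p.2).mpr ⟨hrow, hcol⟩
  exact ⟨((summable_prod_of_nonneg fun p => hf p.2 p.1).mp H.prod_symm).2, H.tsum_comm⟩

open Nat in
lemma hasSum_succ_mul_pow_div_factorial (x : ℝ) :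
    HasSum (fun n : ℕ => (n + 1) * x ^ n / n !) ((1 + x) * Real.exp x) := by
  have hexp : HasSum (fun n : ℕ => x ^ n / n !) (Real.exp x) := by
    simpa [Real.exp_eq_exp_ℝ] using NormedSpace.expSeries_div_hasSum_exp x
  have hmul : HasSum (fun n : ℕ => n * x ^ n / n !) (x * Real.exp x) := by
    rw [← hasSum_nat_add_iff' 1, Finset.sum_range_one]
    simp only [Nat.cast_zero, zero_mul, zero_div, sub_zero]
    refine (hexp.mul_left x).congr_fun fun n => ?_
    rw [factorial_succ]
    push_cast
    field_simp
    ring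
  rw [show (1 + x) * Real.exp x = Real.exp x + x * Real.exp x by ring]
  exact (hexp.add hmul).congr_fun fun n => by ring

open Nat in
lemma convPow_exp_eq (a b : ℝ) (n : ℕ) (t : ℝ) :
    convPow (fun s => a * Real.exp (-(b * s))) n t
      = a ^ (n + 1) * t ^ n / n ! * Real.exp (-(b * t)) := by
  induction n generalizing t with
  | zero => simp [convPow]
  | succ n ih =>
    have hpt : ∀ s, convPow (fun s => a * Real.exp (-(b * s))) n s
        * (a * Real.exp (-(b * (t - s)))) = a ^ (n + 2) / n ! * Real.exp (-(b * t)) * s ^ n :=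
      fun s => by
        rw [ih, show -(b * t) = -(b * s) + -(b * (t - s)) by ring, Real.exp_add]
        ring
    simp only [convPow, hpt, intervalIntegral.integral_const_mul, integral_pow]
    rw [factorial_succ]
    push_cast
    field_simp
    ring

lemma hasSum_succ_mul_convPow_exp (a b t : ℝ) :
    HasSum (fun n : ℕ => (n + 1) * convPow (fun s => a * Real.exp (-(b * s))) n t)
      (a * (1 + a * t) * Real.exp ((a - b) * t)) := by
  rw [show a * (1 + a * t) * Real.exp ((a - b) * t)
      = a * Real.exp (-(b * t)) * ((1 + a * t) * Real.exp (a * t)) by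
    rw [show (a - b) * t = -(b * t) + a * t by ring, Real.exp_add]; ring]
  refine ((hasSum_succ_mul_pow_div_factorial (a * t)).mul_left _).congr_fun fun n => ?_
  rw [convPow_exp_eq]
  ring

variable {d : ℕ}

noncomputable def sqDist (i j : Zd d) : ℝ := ∑ m, ((j m : ℝ) - i m) ^ 2

lemma sqDist_nonneg (i j : Zd d) : 0 ≤ sqDist i j :=
  Finset.sum_nonneg fun _ _ => sq_nonneg _

lemma zNorm_sq (i : Zd d) : zNorm d i ^ 2 = sqDist 0 i := by
  rw [zNorm, Real.sq_sqrt (Finset.sum_nonneg fun _ _ => sq_nonneg _), sqDist]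
  simp

noncomputable def box (i : Zd d) (n : ℕ) : Finset (Zd d) :=
  Finset.Icc (fun k => i k - n) (fun k => i k + n)

lemma mem_box {i j : Zd d} {n : ℕ} :
    j ∈ box i n ↔ ∀ k, i k - n ≤ j k ∧ j k ≤ i k + n := by
  simp [box, Finset.mem_Icc, Pi.le_def, forall_and]

lemma box_subset_box_succ {i k : Zd d} (hk : k ∈ box i 1) (n : ℕ) :
    box k n ⊆ box i (n + 1) := by
  intro j hj
  rw [mem_box] at *
  intro m
  have := hk m
  have := hj m
  push_cast at *
  omega

lemma Amat_nonneg (i j : Zd d) : 0 ≤ Amat d i j := by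
  unfold Amat
  split_ifs <;> positivity

lemma Amat_le (i j : Zd d) : Amat d i j ≤ (2 * (d : ℝ) + 1)⁻¹ := by
  unfold Amat
  split_ifs
  exacts [le_rfl, by positivity]

lemma Amat_ne_zero_iff {i j : Zd d} : Amat d i j ≠ 0 ↔ ∑ k, (i k - j k) ^ 2 ≤ 1 := by
  unfold Amat
  split_ifs with h
  · simpa [h] using (by positivity : (2 * (d : ℝ) + 1) ≠ 0)
  · simp [h]

lemma sqDist_le_one_of_Amat_ne_zero {i j : Zd d} (h : Amat d i j ≠ 0) : sqDist i j ≤ 1 := by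
  have h' : ((∑ k, (i k - j k) ^ 2 : ℤ) : ℝ) ≤ 1 := by exact_mod_cast Amat_ne_zero_iff.mp h
  refine le_of_eq_of_le ?_ h'
  push_cast
  exact Finset.sum_congr rfl fun _ _ => by ring

lemma abs_sub_le_one_of_Amat_ne_zero {i j : Zd d} (h : Amat d i j ≠ 0) (k : Fin d) :
    |i k - j k| ≤ 1 :=
  (sq_le_one_iff_abs_le_one _).mp <|
    (Finset.single_le_sum (fun l _ => sq_nonneg (i l - j l)) (Finset.mem_univ k)).trans
      (Amat_ne_zero_iff.mp h)

lemma mem_box_one_of_Amat_ne_zero {i j : Zd d} (h : Amat d i j ≠ 0) : j ∈ box i 1 :=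
  mem_box.mpr fun k => by
    have := abs_le.mp (abs_sub_le_one_of_Amat_ne_zero h k)
    push_cast
    omega

def neighbor (i : Zd d) : Option (Fin d × Bool) → Zd d
  | none => i
  | some (m, s) => i + Pi.single m (if s then 1 else -1)

lemma exists_neighbor_eq_of_Amat_ne_zero {i j : Zd d} (h : Amat d i j ≠ 0) :
    ∃ o, neighbor i o = j := by
  by_cases hij : j = i
  · exact ⟨none, hij.symm⟩
  obtain ⟨m, hm⟩ := Function.ne_iff.mp hij
  have hm1 : 1 ≤ (i m - j m) ^ 2 := by
    have : i m - j m ≠ 0 := sub_ne_zero.mpr (Ne.symm hm)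
    nlinarith [Int.one_le_abs this, sq_abs (i m - j m)]
  have hother : ∀ l, l ≠ m → j l = i l := fun l hl => by
    have := (Finset.add_le_sum (fun l _ => sq_nonneg (i l - j l)) (Finset.mem_univ l)
      (Finset.mem_univ m) hl).trans (Amat_ne_zero_iff.mp h)
    nlinarith [sq_nonneg (i l - j l)]
  refine ⟨some (m, decide (i m < j m)), funext fun l => ?_⟩
  rcases eq_or_ne l m with rfl | hl
  · have := abs_le.mp (abs_sub_le_one_of_Amat_ne_zero h l)
    simp only [neighbor, Pi.add_apply, Pi.single_eq_same]
    split_ifs with hlt <;> simp at hlt <;> omega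
  · simp [neighbor, Pi.single_eq_of_ne hl, hother l hl]

lemma tsum_Amat_le_one (i : Zd d) : ∑' j, Amat d i j ≤ 1 := by
  classical
  set S := Finset.univ.image (neighbor i)
  have hS : ∀ j ∉ S, Amat d i j = 0 := fun j hj => by
    by_contra h
    obtain ⟨o, rfl⟩ := exists_neighbor_eq_of_Amat_ne_zero h
    exact hj (Finset.mem_image_of_mem _ (Finset.mem_univ o))
  have hcard : (S.card : ℝ) ≤ 2 * d + 1 := by
    exact_mod_cast Finset.card_image_le.trans (by simp [mul_comm])
  calc ∑' j, Amat d i j = ∑ j ∈ S, Amat d i j := tsum_eq_sum hS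
    _ ≤ S.card * (2 * (d : ℝ) + 1)⁻¹ := by
      simpa using Finset.sum_le_sum fun j (_ : j ∈ S) => Amat_le i j
    _ ≤ (2 * d + 1) * (2 * (d : ℝ) + 1)⁻¹ := by gcongr
    _ = 1 := mul_inv_cancel₀ (by positivity)

lemma Apow_nonneg (n : ℕ) (i j : Zd d) : 0 ≤ Apow d n i j := by
  induction n generalizing i with
  | zero => simp only [Apow]; split_ifs <;> norm_num
  | succ n ih => exact tsum_nonneg fun k => mul_nonneg (Amat_nonneg _ _) (ih _)

lemma Apow_eq_zero_of_notMem_box {n : ℕ} {i j : Zd d} (hj : j ∉ box i n) :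
    Apow d n i j = 0 := by
  induction n generalizing i with
  | zero =>
    simp only [Apow, ite_eq_right_iff]
    rintro rfl
    exact absurd (mem_box.mpr fun k => by simp) hj
  | succ n ih =>
    refine (tsum_congr fun k => ?_).trans tsum_zero
    by_cases hA : Amat d i k = 0
    · rw [hA, zero_mul]
    · have hk := mem_box_one_of_Amat_ne_zero hA
      rw [ih fun hj' => hj (box_subset_box_succ hk n hj'), mul_zero]

lemma summable_Apow_mul (n : ℕ) (i : Zd d) (f : Zd d → ℝ) :
    Summable fun j => Apow d n i j * f j :=
  summable_of_ne_finset_zero (s := box i n) fun j hj => by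
    rw [Apow_eq_zero_of_notMem_box hj, zero_mul]

lemma tsum_Apow_mul_eq_sum {n : ℕ} {i : Zd d} (f : Zd d → ℝ) {s : Finset (Zd d)}
    (hs : box i n ⊆ s) : ∑' j, Apow d n i j * f j = ∑ j ∈ s, Apow d n i j * f j :=
  tsum_eq_sum fun j hj => by rw [Apow_eq_zero_of_notMem_box fun h => hj (hs h), zero_mul]

lemma summable_Amat_mul (i : Zd d) (f : Zd d → ℝ) : Summable fun k => Amat d i k * f k :=
  summable_of_ne_finset_zero (s := box i 1) fun k hk => by
    rw [of_not_not fun hA => hk (mem_box_one_of_Amat_ne_zero hA), zero_mul]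

lemma tsum_Amat_mul_eq_sum (i : Zd d) (f : Zd d → ℝ) :
    ∑' k, Amat d i k * f k = ∑ k ∈ box i 1, Amat d i k * f k :=
  tsum_eq_sum fun k hk => by
    rw [of_not_not fun hA => hk (mem_box_one_of_Amat_ne_zero hA), zero_mul]

lemma tsum_Apow_succ_mul (n : ℕ) (i : Zd d) (f : Zd d → ℝ) :
    ∑' j, Apow d (n + 1) i j * f j = ∑' k, Amat d i k * ∑' j, Apow d n k j * f j := by
  rw [tsum_Apow_mul_eq_sum f subset_rfl, tsum_Amat_mul_eq_sum]
  simp only [Apow, tsum_Amat_mul_eq_sum, Finset.sum_mul]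
  rw [Finset.sum_comm]
  refine Finset.sum_congr rfl fun k hk => ?_
  rw [tsum_Apow_mul_eq_sum f (box_subset_box_succ hk n), Finset.mul_sum]
  exact Finset.sum_congr rfl fun j _ => mul_assoc _ _ _

lemma tsum_Apow_le_one (n : ℕ) (i : Zd d) : ∑' j, Apow d n i j ≤ 1 := by
  induction n generalizing i with
  | zero => simp [Apow, @eq_comm _ i]
  | succ n ih =>
    have h := tsum_Apow_succ_mul n i 1
    simp only [Pi.one_apply, mul_one] at h
    calc ∑' j, Apow d (n + 1) i j = ∑' k, Amat d i k * ∑' j, Apow d n k j := h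
      _ ≤ ∑' k, Amat d i k := by
        refine Summable.tsum_le_tsum (fun k => ?_) (summable_Amat_mul i _) ?_
        · exact mul_le_of_le_one_right (Amat_nonneg i k) (ih k)
        · simpa using summable_Amat_mul i 1
      _ ≤ 1 := tsum_Amat_le_one i

lemma Apow_apply_equiv (e : Zd d ≃ Zd d) (he : ∀ i j, Amat d (e i) (e j) = Amat d i j)
    (n : ℕ) (i j : Zd d) : Apow d n (e i) (e j) = Apow d n i j := by
  induction n generalizing i with
  | zero => simp [Apow]
  | succ n ih =>
    simp only [Apow]
    rw [← e.tsum_eq]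
    exact tsum_congr fun k => by rw [he, ih]

def reflect (m : Fin d) (c : ℤ) : Zd d ≃ Zd d :=
  Function.Involutive.toPerm (fun k => Function.update k m (2 * c - k m)) fun k => by
    ext l
    rcases eq_or_ne l m with rfl | hl <;> simp [*]

lemma reflect_apply (m : Fin d) (c : ℤ) (k : Zd d) (l : Fin d) :
    reflect m c k l = if l = m then 2 * c - k m else k l := by
  change Function.update k m _ l = _
  split_ifs with h
  · subst h; simp
  · simp [h]

lemma reflect_apply_self (m : Fin d) (i : Zd d) : reflect m (i m) i = i :=
  funext fun l => by
    rw [reflect_apply]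
    split_ifs with h
    · subst h; ring
    · rfl

lemma Amat_reflect (m : Fin d) (c : ℤ) (i j : Zd d) :
    Amat d (reflect m c i) (reflect m c j) = Amat d i j := by
  unfold Amat
  congr 2
  refine Finset.sum_congr rfl fun l _ => ?_
  simp only [reflect_apply]
  split_ifs with h
  · subst h; ring
  · rfl

/-- Reflecting coordinate `m` about `i m` fixes `i`, preserves `A` and negates the summand. -/
lemma tsum_Apow_mul_sub_eq_zero (n : ℕ) (i : Zd d) (m : Fin d) :
    ∑' j, Apow d n i j * ((j m : ℝ) - i m) = 0 := by
  set e := reflect m (i m)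
  have hneg : ∀ j, Apow d n i (e j) * (((e j) m : ℝ) - i m)
      = -(Apow d n i j * ((j m : ℝ) - i m)) := fun j => by
    rw [show Apow d n i (e j) = Apow d n (e i) (e j) by rw [reflect_apply_self],
      Apow_apply_equiv e (Amat_reflect m (i m)), reflect_apply, if_pos rfl]
    push_cast
    ring
  have h := e.tsum_eq fun j => Apow d n i j * ((j m : ℝ) - i m)
  rw [tsum_congr hneg, tsum_neg] at h
  linarith

/-- Parallel-axis identity; the cross term vanishes by `tsum_Apow_mul_sub_eq_zero`. -/
lemma tsum_Apow_mul_sqDist (n : ℕ) (i k : Zd d) :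
    ∑' j, Apow d n k j * sqDist i j
      = ∑' j, Apow d n k j * sqDist k j + (∑' j, Apow d n k j) * sqDist i k := by
  have hsplit : ∀ j, Apow d n k j * sqDist i j = Apow d n k j * sqDist k j
      + Apow d n k j * sqDist i k
      + ∑ m, 2 * ((k m : ℝ) - i m) * (Apow d n k j * ((j m : ℝ) - k m)) := fun j => by
    simp only [sqDist, Finset.mul_sum, ← Finset.sum_add_distrib]
    exact Finset.sum_congr rfl fun _ _ => by ring
  rw [tsum_congr hsplit, Summable.tsum_add, Summable.tsum_add, Summable.tsum_finsetSum,
    tsum_mul_right]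
  · simp [tsum_mul_left, tsum_Apow_mul_sub_eq_zero]
  · exact fun m _ => (summable_Apow_mul n k _).mul_left _
  · exact summable_Apow_mul n k _
  · exact summable_Apow_mul n k _
  · exact (summable_Apow_mul n k _).add (summable_Apow_mul n k _)
  · exact summable_sum fun m _ => (summable_Apow_mul n k _).mul_left _

lemma tsum_Apow_mul_sqDist_le (n : ℕ) (i : Zd d) : ∑' j, Apow d n i j * sqDist i j ≤ n := by
  induction n generalizing i with
  | zero => simp [Apow, sqDist, @eq_comm _ i]
  | succ n ih =>
    have hstep :
        ∀ k, Amat d i k * ∑' j, Apow d n k j * sqDist i j ≤ Amat d i k * (n + 1) := by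
      intro k
      by_cases hA : Amat d i k = 0
      · simp [hA]
      refine mul_le_mul_of_nonneg_left ?_ (Amat_nonneg i k)
      rw [tsum_Apow_mul_sqDist]
      have hρ : (∑' j, Apow d n k j) * sqDist i k ≤ 1 :=
        mul_le_one₀ (tsum_Apow_le_one n k) (sqDist_nonneg i k)
          (sqDist_le_one_of_Amat_ne_zero hA)
      linarith [ih k]
    calc ∑' j, Apow d (n + 1) i j * sqDist i j
        = ∑' k, Amat d i k * ∑' j, Apow d n k j * sqDist i j := tsum_Apow_succ_mul n i _
      _ ≤ ∑' k, Amat d i k * (n + 1) :=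
        Summable.tsum_le_tsum hstep (summable_Amat_mul i _) (summable_Amat_mul i _)
      _ = (∑' k, Amat d i k) * (n + 1) := tsum_mul_right
      _ ≤ n + 1 := mul_le_of_le_one_left (by positivity) (tsum_Amat_le_one i)
      _ = (n + 1 : ℕ) := by push_cast; rfl

theorem stmt16_general (d : ℕ) (a b : ℝ) (hb : 0 < b) (hab : b < a) :
    ∃ C : ℝ, ∀ t : ℝ, 0 ≤ t →
      (Summable fun i : Zd d => (zNorm d i) ^ 2 * GammaImp d a b i t) ∧
      (∑' i : Zd d, (zNorm d i) ^ 2 * GammaImp d a b i t)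
        ≤ C * (1 + t) * Real.exp ((a - b) * t) := by
  have ha : 0 < a := hb.trans hab
  refine ⟨a * (1 + a), fun t ht => ?_⟩
  set c := fun n => convPow (fun s => a * Real.exp (-(b * s))) n t
  have hc : ∀ n, 0 ≤ c n := fun n => by simp only [c, convPow_exp_eq]; positivity
  set f := fun n i => sqDist 0 i * (Apow d (n + 1) 0 i * c n)
  have hf : ∀ n i, 0 ≤ f n i := fun n i =>
    mul_nonneg (sqDist_nonneg _ _) (mul_nonneg (Apow_nonneg _ _ _) (hc n))
  have hΓ : ∀ i, zNorm d i ^ 2 * GammaImp d a b i t = ∑' n, f n i := fun i => by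
    rw [zNorm_sq, GammaImp, ← tsum_mul_left]
    rfl
  have hrow : ∀ n, ∑' i, f n i ≤ (n + 1) * c n := fun n => by
    simp only [f, mul_left_comm (sqDist 0 _), ← mul_assoc, tsum_mul_right]
    refine mul_le_mul_of_nonneg_right ?_ (hc n)
    exact_mod_cast tsum_Apow_mul_sqDist_le (n + 1) 0
  have hmaj := hasSum_succ_mul_convPow_exp a b t
  have hcol : Summable fun n => ∑' i, f n i :=
    hmaj.summable.of_nonneg_of_le (fun n => tsum_nonneg (hf n)) hrow
  obtain ⟨hsum, hcomm⟩ := summable_tsum_comm_of_nonneg hf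
    (fun n => by simpa only [f, mul_left_comm (sqDist 0 _)] using
      summable_Apow_mul (n + 1) 0 fun i => sqDist 0 i * c n) hcol
  refine ⟨hsum.congr fun i => (hΓ i).symm, ?_⟩
  calc ∑' i, zNorm d i ^ 2 * GammaImp d a b i t = ∑' n, ∑' i, f n i :=
        (tsum_congr hΓ).trans hcomm
    _ ≤ ∑' n : ℕ, (n + 1) * c n := Summable.tsum_le_tsum hrow hcol hmaj.summable
    _ = a * (1 + a * t) * Real.exp ((a - b) * t) := hmaj.tsum_eq
    _ ≤ a * (1 + a) * (1 + t) * Real.exp ((a - b) * t) := by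
      gcongr ?_ * _
      nlinarith [mul_nonneg ha.le ht]

/-- For `d ≥ 1`, `a > b > 0` and `Γ(i,t) = ∑_{n≥1} Aⁿ(0,i) φ^{⋆n}(t)` with
`φ t = a e^{-bt}`, there is a constant `C` such that for all `t ≥ 0`,
`∑_{i∈ℤ^d} |i|² Γ(i,t) ≤ C (1+t) e^{(a-b)t}` (and the sum is finite). -/
theorem stmt16 (d : ℕ) (hd : 1 ≤ d) (a b : ℝ) (hb : 0 < b) (hab : b < a) :
    ∃ C : ℝ, ∀ t : ℝ, 0 ≤ t →
      (Summable fun i : Zd d => (zNorm d i) ^ 2 * GammaImp d a b i t) ∧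
      (∑' i : Zd d, (zNorm d i) ^ 2 * GammaImp d a b i t)
        ≤ C * (1 + t) * Real.exp ((a - b) * t) :=
  stmt16_general d a b hb hab
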